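/- arXiv:math/0311284 — 7 statements merged into one kernel-verified Lean document; each statement's English description precedes it below -/
import Mathlib

section
/- Let x₁,x₂,x₃,x₄ ∈ ℤ³ be vertices of a tetrahedron whose only non-vertex lattice point is the origin, lying strictly in its interior. Let μᵢ = λᵢ/h be the barycentric coordinates of the origin (λᵢ ∈ ℕ coprime, h = Σλᵢ). Then for all κ ∈ {2,...,h-2}, Σᵢ {κλᵢ/h} = 2. -/
/-- The real vector corresponding to a lattice point of `ℤ³`. -/
noncomputable def toR (x : Fin 3 → ℤ) : Fin 3 → ℝ := fun i => (x i : ℝ)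

/-- A lattice tetrahedron in `ℤ³` is *Fano* if its vertices are affinely independent
lattice points, and the only lattice point it contains other than its vertices is the
origin, which lies strictly in its interior. -/
def IsFanoTetra (x : Fin 4 → Fin 3 → ℤ) : Prop :=
  AffineIndependent ℝ (fun i => toR (x i)) ∧
  (0 : Fin 3 → ℝ) ∈ interior (convexHull ℝ (Set.range fun i => toR (x i))) ∧
  ∀ p : Fin 3 → ℤ, toR p ∈ convexHull ℝ (Set.range fun i => toR (x i)) →
    p = 0 ∨ ∃ i, p = x i

/-!
Since `∑ λᵢ = h`, the sum `S(κ)` of the fractional parts `{κλᵢ/h}` is an integer in `[0, 4)`.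
`S(κ) = 0` would make `h` divide every `κλᵢ`, hence `κ` by coprimality. If `S(κ) = 1`, the
fractional parts are the barycentric coordinates of a lattice point of the tetrahedron: it differs
from `∑ (κλᵢ/h) xᵢ = 0` by an integer combination of the vertices. By the Fano property this point
is a vertex, impossible as fractional parts are `< 1`, or the origin, whose barycentric coordinates
`λᵢ/h` force `h ∣ (κ - 1) λᵢ`. Finally `S(h - κ) = 4 - S(κ)` when no `{κλᵢ/h}` vanishes, which
rules out `S(κ) = 3`.
-/

open Finset

@[simp]
lemma toR_apply (p : Fin 3 → ℤ) (j : Fin 3) : toR p j = p j := rfl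

@[simp]
lemma toR_zero : toR 0 = 0 := funext fun j => by simp

lemma Int.dvd_mul_gcd {h c a b : ℤ} (ha : h ∣ c * a) (hb : h ∣ c * b) :
    h ∣ c * (Int.gcd a b : ℤ) := by
  rw [Int.gcd_eq_gcd_ab, mul_add, ← mul_assoc, ← mul_assoc]
  exact dvd_add (ha.mul_right _) (hb.mul_right _)

lemma dvd_of_forall_dvd_mul_of_gcd_eq_one {l : Fin 4 → ℤ}
    (hgcd : Int.gcd (Int.gcd (Int.gcd (l 0) (l 1)) (l 2)) (l 3) = 1) {h c : ℤ}
    (hdvd : ∀ i, h ∣ c * l i) : h ∣ c := by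
  simpa [hgcd] using
    Int.dvd_mul_gcd (Int.dvd_mul_gcd (Int.dvd_mul_gcd (hdvd 0) (hdvd 1)) (hdvd 2)) (hdvd 3)

lemma Int.dvd_sub_of_fract_div_eq {a b h : ℤ} (hh : h ≠ 0)
    (hab : Int.fract ((a : ℚ) / h) = b / h) : h ∣ a - b := by
  have hh' : (h : ℚ) ≠ 0 := by exact_mod_cast hh
  rw [Int.fract, sub_eq_iff_eq_add, div_add' _ _ _ hh', div_left_inj' hh'] at hab
  refine ⟨⌊(a : ℚ) / h⌋, ?_⟩
  have : (a : ℚ) = b + h * ⌊(a : ℚ) / h⌋ := by linear_combination hab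
  rw [sub_eq_iff_eq_add']
  exact_mod_cast this

lemma Int.fract_sub_mul_div_self {l h κ : ℤ} (hh : h ≠ 0)
    (hκ : Int.fract (((κ * l : ℤ) : ℚ) / h) ≠ 0) :
    Int.fract ((((h - κ) * l : ℤ) : ℚ) / h) = 1 - Int.fract (((κ * l : ℤ) : ℚ) / h) := by
  have : (((h - κ) * l : ℤ) : ℚ) / h = l + -(((κ * l : ℤ) : ℚ) / h) := by
    push_cast
    field_simp
    ring
  rw [this, Int.fract_intCast_add, Int.fract_neg hκ]

lemma exists_sum_fract_mul_div_eq {ι : Type*} [Fintype ι] [Nonempty ι] {l : ι → ℤ} {h : ℤ}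
    (hl : ∑ i, l i = h) (hh : h ≠ 0) (κ : ℤ) :
    ∃ n : ℤ, ∑ i, Int.fract (((κ * l i : ℤ) : ℚ) / h) = n ∧ 0 ≤ n ∧ n < Fintype.card ι := by
  have hsum : ∑ i, Int.fract (((κ * l i : ℤ) : ℚ) / h)
      = ((κ - ∑ i, ⌊((κ * l i : ℤ) : ℚ) / h⌋ : ℤ) : ℚ) := by
    simp only [Int.fract, sum_sub_distrib]
    push_cast
    rw [← sum_div, ← mul_sum, ← Int.cast_sum, hl, mul_div_cancel_right₀ _ (by exact_mod_cast hh)]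
  refine ⟨_, hsum, ?_, ?_⟩
  · have := sum_nonneg fun i (_ : i ∈ univ) => Int.fract_nonneg (((κ * l i : ℤ) : ℚ) / h)
    rw [hsum] at this
    exact_mod_cast this
  · rw [← Int.cast_lt (R := ℚ), ← hsum]
    calc ∑ i, Int.fract (((κ * l i : ℤ) : ℚ) / h) < ∑ _i : ι, 1 :=
          sum_lt_sum_of_nonempty univ_nonempty fun i _ => Int.fract_lt_one _
      _ = Fintype.card ι := by simp

lemma sum_fract_mul_div_ne_zero {l : Fin 4 → ℤ}
    (hgcd : Int.gcd (Int.gcd (Int.gcd (l 0) (l 1)) (l 2)) (l 3) = 1) {h κ : ℤ}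
    (hκ : 0 < κ) (hκh : κ < h) : ∑ i, Int.fract (((κ * l i : ℤ) : ℚ) / h) ≠ 0 := by
  intro hsum
  have hdvd : ∀ i, h ∣ κ * l i := fun i => by
    have hi := (sum_eq_zero_iff_of_nonneg fun i _ => Int.fract_nonneg _).1 hsum i (mem_univ i)
    simpa using Int.dvd_sub_of_fract_div_eq (b := 0) (by omega) (by simpa using hi)
  have := Int.le_of_dvd hκ (dvd_of_forall_dvd_mul_of_gcd_eq_one hgcd hdvd)
  omega

namespace IsFanoTetra

variable {x : Fin 4 → Fin 3 → ℤ}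

lemma eq_or_exists_eq_single_of_sum_smul_eq_toR (hx : IsFanoTetra x) {μ w : Fin 4 → ℝ}
    (hμ : ∑ i, μ i = 1) (hμx : ∑ i, μ i • toR (x i) = 0)
    (hw₀ : ∀ i, 0 ≤ w i) (hw : ∑ i, w i = 1) {p : Fin 3 → ℤ}
    (hp : ∑ i, w i • toR (x i) = toR p) : w = μ ∨ ∃ j, w = Pi.single j 1 := by
  have hmem : toR p ∈ convexHull ℝ (Set.range fun i => toR (x i)) :=
    hp ▸ (convex_convexHull ℝ _).sum_mem (fun i _ => hw₀ i) hw
      fun i _ => subset_convexHull ℝ _ (Set.mem_range_self i)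
  rcases hx.2.2 p hmem with rfl | ⟨j, rfl⟩
  · left
    funext i
    refine hx.1.eq_of_sum_eq_sum (hw.trans hμ.symm) ?_ i (mem_univ i)
    rw [hp, hμx, toR_zero]
  · right
    refine ⟨j, funext fun i => hx.1.eq_of_sum_eq_sum (by simpa using hw) ?_ i (mem_univ i)⟩
    simpa [Pi.single_apply] using hp

lemma sum_fract_mul_div_ne_one (hx : IsFanoTetra x) {l : Fin 4 → ℤ}
    (hgcd : Int.gcd (Int.gcd (Int.gcd (l 0) (l 1)) (l 2)) (l 3) = 1)
    (hbary : ∑ i, l i • x i = 0) {h : ℤ} (hl : ∑ i, l i = h) {κ : ℤ} (hκ : 1 < κ)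
    (hκh : κ < h) : ∑ i, Int.fract (((κ * l i : ℤ) : ℚ) / h) ≠ 1 := by
  intro hsum
  have hh : (h : ℝ) ≠ 0 := by exact_mod_cast (show h ≠ 0 by omega)
  set f : Fin 4 → ℝ := fun i => ((Int.fract (((κ * l i : ℤ) : ℚ) / h) : ℚ) : ℝ)
  set μ : Fin 4 → ℝ := fun i => l i / h
  have hμ : ∑ i, μ i = 1 := by
    rw [← sum_div, div_eq_one_iff_eq hh]
    exact_mod_cast hl
  have hμx : ∑ i, μ i • toR (x i) = 0 := by
    funext j
    have hj : ∑ i, (l i : ℝ) * x i j = 0 := by exact_mod_cast congrFun hbary j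
    simp [μ, div_mul_eq_mul_div, ← sum_div, hj]
  have hf : ∑ i, f i = 1 := by rw [← Rat.cast_sum, hsum, Rat.cast_one]
  set m : Fin 4 → ℤ := fun i => ⌊((κ * l i : ℤ) : ℚ) / h⌋
  have hfm : ∀ i, f i = κ * μ i - m i := fun i => by
    simp only [f, μ, m, Int.fract]
    push_cast
    ring
  have hp : ∑ i, f i • toR (x i) = toR (-∑ i, m i • x i) := by
    simp_rw [hfm, sub_smul, sum_sub_distrib, mul_smul, ← smul_sum, hμx, smul_zero, zero_sub]
    funext j
    simp
  rcases hx.eq_or_exists_eq_single_of_sum_smul_eq_toR hμ hμx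
    (fun i => by simp [f, Int.fract_nonneg]) hf hp with hfμ | ⟨j, hfj⟩
  · have hdvd : ∀ i, h ∣ (κ - 1) * l i := fun i => by
      have hi : Int.fract (((κ * l i : ℤ) : ℚ) / h) = (l i : ℚ) / h := by
        refine Rat.cast_injective (α := ℝ) ?_
        simpa [f, μ] using congrFun hfμ i
      simpa [sub_mul] using Int.dvd_sub_of_fract_div_eq (by omega) hi
    have := Int.le_of_dvd (by omega) (dvd_of_forall_dvd_mul_of_gcd_eq_one hgcd hdvd)
    omega
  · have hj : Int.fract (((κ * l j : ℤ) : ℚ) / h) = 1 :=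
      Rat.cast_injective (α := ℝ) (by simpa [f] using congrFun hfj j)
    exact (Int.fract_lt_one _).ne hj

lemma sum_fract_mul_div_ne_three (hx : IsFanoTetra x) {l : Fin 4 → ℤ}
    (hgcd : Int.gcd (Int.gcd (Int.gcd (l 0) (l 1)) (l 2)) (l 3) = 1)
    (hbary : ∑ i, l i • x i = 0) {h : ℤ} (hl : ∑ i, l i = h) {κ : ℤ} (hκ : 1 < κ)
    (hκh : κ < h - 1) : ∑ i, Int.fract (((κ * l i : ℤ) : ℚ) / h) ≠ 3 := by
  intro hsum
  have hne : ∀ i, Int.fract (((κ * l i : ℤ) : ℚ) / h) ≠ 0 := by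
    intro i hi
    have hlt := fun j => Int.fract_lt_one (((κ * l j : ℤ) : ℚ) / h)
    rw [Fin.sum_univ_four] at hsum
    fin_cases i <;> dsimp at hi <;> linarith [hlt 0, hlt 1, hlt 2, hlt 3]
  refine hx.sum_fract_mul_div_ne_one hgcd hbary hl (κ := h - κ) (by omega) (by omega) ?_
  rw [sum_congr rfl fun i _ => Int.fract_sub_mul_div_self (by omega) (hne i), sum_sub_distrib,
    hsum]
  norm_num

end IsFanoTetra

theorem fanoTetra_fract_sum_eq_two_general
    (x : Fin 4 → Fin 3 → ℤ) (hx : IsFanoTetra x)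
    (l : Fin 4 → ℤ)
    (hgcd : Int.gcd (Int.gcd (Int.gcd (l 0) (l 1)) (l 2)) (l 3) = 1)
    (hbary : (∑ i, l i • x i) = 0)
    (h : ℤ) (hh : h = l 0 + l 1 + l 2 + l 3) :
    ∀ κ : ℤ, 2 ≤ κ → κ ≤ h - 2 →
      (∑ i, Int.fract (((κ * l i : ℤ) : ℚ) / (h : ℚ))) = 2 := by
  intro κ hκ hκh
  have hl : ∑ i, l i = h := by rw [Fin.sum_univ_four, hh]
  obtain ⟨n, hn, hn₀, hn₄⟩ := exists_sum_fract_mul_div_eq hl (by omega) κ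
  have h0 : n ≠ 0 := by
    rintro rfl
    exact sum_fract_mul_div_ne_zero hgcd (κ := κ) (by omega) (by omega) (hn.trans Int.cast_zero)
  have h1 : n ≠ 1 := by
    rintro rfl
    exact hx.sum_fract_mul_div_ne_one hgcd hbary hl (κ := κ) (by omega) (by omega)
      (hn.trans Int.cast_one)
  have h3 : n ≠ 3 := by
    rintro rfl
    exact hx.sum_fract_mul_div_ne_three hgcd hbary hl (κ := κ) (by omega) (by omega)
      (hn.trans (Int.cast_ofNat 3))
  have h2 : n = 2 := by simp only [Fintype.card_fin] at hn₄; omega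
  rw [hn, h2, Int.cast_ofNat]

theorem fanoTetra_fract_sum_eq_two
    (x : Fin 4 → Fin 3 → ℤ) (hx : IsFanoTetra x)
    (l : Fin 4 → ℤ) (hpos : ∀ i, 0 < l i)
    (hgcd : Int.gcd (Int.gcd (Int.gcd (l 0) (l 1)) (l 2)) (l 3) = 1)
    (hbary : (∑ i, l i • x i) = 0)
    (h : ℤ) (hh : h = l 0 + l 1 + l 2 + l 3) :
    ∀ κ : ℤ, 2 ≤ κ → κ ≤ h - 2 →
      (∑ i, Int.fract (((κ * l i : ℤ) : ℚ) / (h : ℚ))) = 2 :=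
  fanoTetra_fract_sum_eq_two_general x hx l hgcd hbary h hh
end

section
/- Let x₁,x₂,x₃,x₄ ∈ ℤ³ be the vertices of a Fano tetrahedron with barycentric weights λ₁,...,λ₄ (positive coprime integers with Σλᵢxᵢ = 0). Then gcd(λᵢ,λⱼ) = 1 for all i ≠ j. -/
/-!
Let `d = gcd(λᵢ, λⱼ)`. Reducing `∑ λᵣ xᵣ = 0` modulo `d` shows that `(1/d) ∑ (λᵣ mod d) xᵣ` is a
lattice point, and so is `(1/d) ∑ (-λᵣ mod d) xᵣ`. Both are combinations of the two vertices
other than `xᵢ, xⱼ` with coefficients in `[0, 1)`, and the two coefficient sums add up to at most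
`2`, so one of these points lies in the triangle spanned by the origin and those two vertices,
hence in the tetrahedron. By the Fano condition it is the origin or a vertex. Affine
independence forces every linear relation among the vertices to be a multiple of `λ`, which
rules out a vertex and leaves only the origin with all coefficients zero: `d` divides every `λᵣ`,
so `d = 1`.
-/

theorem AffineIndependent.eq_zero_of_sum_smul_eq_zero {k V ι : Type*} [Field k]
    [AddCommGroup V] [Module k V] [Fintype ι] {p : ι → V} (hp : AffineIndependent k p)
    {w c : ι → k} (hw : ∑ r, w r • p r = 0) (hw₀ : ∑ r, w r ≠ 0) (hc : ∑ r, c r • p r = 0)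
    {i : ι} (hwi : w i ≠ 0) (hci : c i = 0) : c = 0 := by
  set t := (∑ r, c r) / ∑ r, w r
  have hct : c = t • w := funext fun r =>
    hp.eq_of_sum_eq_sum (s := Finset.univ) (w₂ := t • w)
      (by simp [t, ← Finset.mul_sum, div_mul_cancel₀ _ hw₀])
      (by simp [hc, mul_smul, ← Finset.smul_sum, hw]) r (Finset.mem_univ r)
  have ht : t = 0 := by simpa [hci, hwi] using (congrFun hct i).symm
  rw [hct, ht, zero_smul]

theorem Convex.sum_smul_mem_of_zero_mem {𝕜 E ι : Type*} [Field 𝕜] [LinearOrder 𝕜]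
    [IsStrictOrderedRing 𝕜] [AddCommGroup E] [Module 𝕜 E] [Fintype ι] {s : Set E}
    (hs : Convex 𝕜 s) (h0 : 0 ∈ s) {w : ι → 𝕜} {p : ι → E} (hw₀ : ∀ r, 0 ≤ w r)
    (hw₁ : ∑ r, w r ≤ 1) (hp : ∀ r, p r ∈ s) : ∑ r, w r • p r ∈ s := by
  simpa [Fintype.sum_option] using hs.sum_mem (t := Finset.univ)
    (w := fun o : Option ι => o.elim (1 - ∑ r, w r) w) (z := fun o : Option ι => o.elim 0 p)
    (by rintro (_ | r) _ <;> simp [hw₀, hw₁]) (by simp [Fintype.sum_option])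
    (by rintro (_ | r) _ <;> simp [h0, hp])

theorem Int.emod_add_neg_emod_le {a d : ℤ} (hd : 0 < d) : a % d + -a % d ≤ d := by
  rw [Int.neg_emod, Int.natAbs_of_nonneg hd.le]
  split_ifs with h
  · simp [Int.emod_eq_zero_of_dvd h, hd.le]
  · simp

theorem sum_emod_add_sum_neg_emod_le {ι : Type*} [Fintype ι] [DecidableEq ι] {d : ℤ}
    (hd : 0 < d) {w : ι → ℤ} {i j : ι} (hij : i ≠ j) (hwi : d ∣ w i) (hwj : d ∣ w j) :
    ∑ r, w r % d + ∑ r, -w r % d ≤ (Fintype.card ι - 2) • d := by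
  have hvanish : ∀ r ∈ ({i, j} : Finset ι), w r % d + -w r % d = 0 := by
    intro r hr
    have hr : d ∣ w r := by
      rcases Finset.mem_insert.1 hr with rfl | hr
      · exact hwi
      · rwa [Finset.mem_singleton.1 hr]
    simp [Int.emod_eq_zero_of_dvd hr, Int.emod_eq_zero_of_dvd (dvd_neg.2 hr)]
  calc ∑ r, w r % d + ∑ r, -w r % d
      = ∑ r ∈ ({i, j} : Finset ι)ᶜ, (w r % d + -w r % d) := by
        rw [← Finset.sum_add_distrib, ← Finset.sum_compl_add_sum {i, j},
          Finset.sum_eq_zero hvanish, add_zero]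
    _ ≤ ({i, j} : Finset ι)ᶜ.card • d :=
        Finset.sum_le_card_nsmul _ _ _ fun r _ => Int.emod_add_neg_emod_le hd
    _ = (Fintype.card ι - 2) • d := by rw [Finset.card_compl, Finset.card_pair hij]

theorem toR_sum_smul {ι : Type*} [Fintype ι] (c : ι → ℤ) (y : ι → Fin 3 → ℤ) :
    toR (∑ r, c r • y r) = ∑ r, (c r : ℝ) • toR (y r) := by
  ext m
  simp [toR, Finset.sum_apply]

theorem sum_emod_smul_eq_smul {ι M : Type*} [Fintype ι] [AddCommGroup M] {w : ι → ℤ}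
    {y : ι → M} (hw : ∑ r, w r • y r = 0) (d : ℤ) :
    ∑ r, (w r % d) • y r = d • -∑ r, (w r / d) • y r := by
  simp only [Int.emod_def, sub_smul, Finset.sum_sub_distrib, hw, mul_smul, ← Finset.smul_sum,
    zero_sub, smul_neg]

namespace IsFanoTetra

variable {x : Fin 4 → Fin 3 → ℤ} {l : Fin 4 → ℤ}

theorem eq_zero_of_toR_eq_sum_smul (hx : IsFanoTetra x) (hpos : ∀ r, 0 < l r)
    (hbary : ∑ r, l r • x r = 0) {α : Fin 4 → ℝ} (hα₀ : ∀ r, 0 ≤ α r) (hα₁ : ∀ r, α r < 1)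
    (hsum : ∑ r, α r ≤ 1) {i j : Fin 4} (hij : i ≠ j) (hi : α i = 0) (hj : α j = 0)
    {q : Fin 3 → ℤ} (hq : toR q = ∑ r, α r • toR (x r)) : α = 0 := by
  obtain ⟨haff, h0, hlat⟩ := hx
  have hl0 : ∀ r, (l r : ℝ) ≠ 0 := fun r => by exact_mod_cast (hpos r).ne'
  have hl : ∑ r, (l r : ℝ) • toR (x r) = 0 := by rw [← toR_sum_smul, hbary]; ext; simp [toR]
  have hlsum : ∑ r, (l r : ℝ) ≠ 0 :=
    (Finset.sum_pos (fun r _ => by exact_mod_cast hpos r) Finset.univ_nonempty).ne'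
  have relation (c : Fin 4 → ℝ) (hc : ∑ r, c r • toR (x r) = 0) (k : Fin 4) (hk : c k = 0) :
      c = 0 :=
    haff.eq_zero_of_sum_smul_eq_zero hl hlsum hc (hl0 k) hk
  have hmem : toR q ∈ convexHull ℝ (Set.range fun r => toR (x r)) :=
    hq ▸ (convex_convexHull ℝ _).sum_smul_mem_of_zero_mem (interior_subset h0) hα₀ hsum
      fun r => subset_convexHull ℝ _ ⟨r, rfl⟩
  rcases hlat q hmem with rfl | ⟨m, rfl⟩
  · exact relation α (by rw [← hq]; ext; simp [toR]) i hi
  · -- `α - eₘ` is then a relation, vanishing at whichever of `i, j` differs from `m`.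
    obtain ⟨k, hkm, hk⟩ : ∃ k, k ≠ m ∧ α k = 0 := by
      by_cases him : i = m
      · exact ⟨j, him ▸ hij.symm, hj⟩
      · exact ⟨i, him, hi⟩
    have hrel := relation (α - Pi.single m 1)
      (by simp [sub_smul, Finset.sum_sub_distrib, ← hq]) k (by simp [hk, hkm])
    have hm : α m = 1 := by simpa [sub_eq_zero] using congrFun hrel m
    exact ((hα₁ m).ne hm).elim

theorem dvd_of_sum_emod_le (hx : IsFanoTetra x) (hpos : ∀ r, 0 < l r)
    (hbary : ∑ r, l r • x r = 0) {d : ℤ} (hd : 0 < d) {w : Fin 4 → ℤ}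
    (hw : ∑ r, w r • x r = 0) {i j : Fin 4} (hij : i ≠ j) (hwi : d ∣ w i) (hwj : d ∣ w j)
    (hsum : ∑ r, w r % d ≤ d) (r : Fin 4) : d ∣ w r := by
  have hdR : (0 : ℝ) < d := by exact_mod_cast hd
  set α : Fin 4 → ℝ := fun r => ((w r % d : ℤ) : ℝ) / d
  have hq : toR (-∑ r, (w r / d) • x r) = ∑ r, α r • toR (x r) := by
    have h := congrArg toR (sum_emod_smul_eq_smul hw d)
    rw [toR_sum_smul] at h
    simp only [α, div_eq_inv_mul, mul_smul, ← Finset.smul_sum, h]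
    ext m
    simp [toR, hdR.ne']
  have hα := hx.eq_zero_of_toR_eq_sum_smul hpos hbary (α := α)
    (fun r => div_nonneg (by exact_mod_cast Int.emod_nonneg _ hd.ne') hdR.le)
    (fun r => (div_lt_one hdR).2 (by exact_mod_cast Int.emod_lt_of_pos _ hd))
    (by rw [← Finset.sum_div, div_le_one hdR]; exact_mod_cast hsum) hij
    (by simp [α, Int.emod_eq_zero_of_dvd hwi]) (by simp [α, Int.emod_eq_zero_of_dvd hwj]) hq
  simpa [α, hdR.ne'] using congrFun hα r

end IsFanoTetra

theorem fanoTetra_weights_pairwise_coprime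
    (x : Fin 4 → Fin 3 → ℤ) (hx : IsFanoTetra x)
    (l : Fin 4 → ℤ) (hpos : ∀ i, 0 < l i)
    (hgcd : Int.gcd (Int.gcd (Int.gcd (l 0) (l 1)) (l 2)) (l 3) = 1)
    (hbary : (∑ i, l i • x i) = 0) :
    ∀ i j, i ≠ j → Int.gcd (l i) (l j) = 1 := by
  intro i j hij
  set d : ℤ := ((l i).gcd (l j) : ℤ)
  have hd : 0 < d := Int.natCast_pos.2 (Int.gcd_pos_of_ne_zero_left _ (hpos i).ne')
  have hdi : d ∣ l i := Int.gcd_dvd_left _ _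
  have hdj : d ∣ l j := Int.gcd_dvd_right _ _
  have hdvd : ∀ r, d ∣ l r := by
    rcases le_or_gt (∑ r, l r % d) d with h | h
    · exact hx.dvd_of_sum_emod_le hpos hbary hd hbary hij hdi hdj h
    · have hresidues := sum_emod_add_sum_neg_emod_le hd hij hdi hdj
      rw [Fintype.card_fin, show 4 - 2 = 2 from rfl, two_nsmul] at hresidues
      have hneg : ∑ r, (-l) r • x r = 0 := by
        simp only [Pi.neg_apply, neg_smul, Finset.sum_neg_distrib, hbary, neg_zero]
      refine fun r => dvd_neg.1 (hx.dvd_of_sum_emod_le hpos hbary hd hneg hij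
        (dvd_neg.2 hdi) (dvd_neg.2 hdj) ?_ r)
      simp only [Pi.neg_apply]
      linarith
  have hd1 : d ∣ 1 := by
    have h := Int.dvd_coe_gcd
      (Int.dvd_coe_gcd (Int.dvd_coe_gcd (hdvd 0) (hdvd 1)) (hdvd 2)) (hdvd 3)
    rwa [hgcd, Nat.cast_one] at h
  simpa [d] using Int.eq_one_of_dvd_one hd.le hd1
end

section
/- Let λ₁,...,λ₄ be positive coprime integers associated with a Fano tetrahedron, h = Σλᵢ. Then for every κ ∈ {2,...,h-2}, Σᵢ ⌈κλᵢ/h⌉ = κ + 2. -/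
/-- Ceiling of an integer division with positive remainder. -/
lemma ceil_int_div (a h q r : ℤ) (hh : 0 < h) (e : a = h * q + r)
    (hr0 : 0 < r) (hrh : r ≤ h) : ⌈((a : ℚ)) / (h : ℚ)⌉ = q + 1 := by
  have hhQ : (0 : ℚ) < (h : ℚ) := by exact_mod_cast hh
  rw [Int.ceil_eq_iff]
  constructor
  · rw [lt_div_iff₀ hhQ]
    have : ((a : ℚ)) = (h : ℚ) * q + r := by exact_mod_cast congrArg (Int.cast : ℤ → ℚ) e
    rw [this]
    have : (0 : ℚ) < (r : ℚ) := by exact_mod_cast hr0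
    push_cast
    nlinarith
  · rw [div_le_iff₀ hhQ]
    have e' : ((a : ℚ)) = (h : ℚ) * q + r := by exact_mod_cast congrArg (Int.cast : ℤ → ℚ) e
    rw [e']
    have : (r : ℚ) ≤ (h : ℚ) := by exact_mod_cast hrh
    push_cast
    nlinarith

lemma dvd_of_forall_dvd_mul (h κ : ℤ) (l : Fin 4 → ℤ)
    (hgcd : Int.gcd (Int.gcd (Int.gcd (l 0) (l 1)) (l 2)) (l 3) = 1)
    (hd : ∀ i, h ∣ κ * l i) : h ∣ κ := by
  have H : ∀ i, h.natAbs ∣ κ.natAbs * (l i).natAbs := by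
    intro i
    rw [← Int.natAbs_mul]
    exact Int.natAbs_dvd_natAbs.mpr (hd i)
  have h01 : h.natAbs ∣ κ.natAbs * Nat.gcd (l 0).natAbs (l 1).natAbs := by
    rw [← Nat.gcd_mul_left]; exact Nat.dvd_gcd (H 0) (H 1)
  have h012 : h.natAbs ∣ κ.natAbs * Nat.gcd (Nat.gcd (l 0).natAbs (l 1).natAbs) (l 2).natAbs := by
    rw [← Nat.gcd_mul_left]; exact Nat.dvd_gcd h01 (H 2)
  have h0123 : h.natAbs ∣ κ.natAbs *
      Nat.gcd (Nat.gcd (Nat.gcd (l 0).natAbs (l 1).natAbs) (l 2).natAbs) (l 3).natAbs := by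
    rw [← Nat.gcd_mul_left]; exact Nat.dvd_gcd h012 (H 3)
  have hg : Nat.gcd (Nat.gcd (Nat.gcd (l 0).natAbs (l 1).natAbs) (l 2).natAbs) (l 3).natAbs = 1 := by
    simpa [Int.gcd, Int.natAbs_natCast] using hgcd
  rw [hg, mul_one] at h0123
  exact Int.natAbs_dvd_natAbs.mp h0123

/-- If the residues of `κ * l i` mod `h` sum to exactly `h`, then they equal the `l i`. -/
lemma fano_rem_eq (x : Fin 4 → Fin 3 → ℤ) (hx : IsFanoTetra x)
    (l : Fin 4 → ℤ) (hpos : ∀ i, 0 < l i)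
    (hbary : (∑ i, l i • x i) = 0)
    (h : ℤ) (hh : h = l 0 + l 1 + l 2 + l 3)
    (κ : ℤ) (hsum : (∑ i, (κ * l i) % h) = h) :
    ∀ i, (κ * l i) % h = l i := by
  have hh0 : 0 < h := by
    have := hpos 0; have := hpos 1; have := hpos 2; have := hpos 3; omega
  set q : Fin 4 → ℤ := fun i => (κ * l i) / h with hqdef
  set r : Fin 4 → ℤ := fun i => (κ * l i) % h with hrdef
  have hqr : ∀ i, κ * l i = h * q i + r i := fun i => (Int.mul_ediv_add_emod _ _).symm
  have hr0 : ∀ i, 0 ≤ r i := fun i => Int.emod_nonneg _ (ne_of_gt hh0)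
  have hrlt : ∀ i, r i < h := fun i => Int.emod_lt_of_pos _ hh0
  have hZ : ∀ j, (∑ i, l i * x i j) = 0 := by
    intro j
    have := congrFun hbary j
    simpa [Finset.sum_apply] using this
  set p : Fin 3 → ℤ := fun j => -∑ i, q i * x i j with hpdef
  have hpid : ∀ j, (h : ℝ) * (p j : ℝ) = ∑ i, (r i : ℝ) * (x i j : ℝ) := by
    intro j
    have hz := hZ j
    have hint : h * p j = ∑ i, r i * x i j := by
      simp only [hpdef, Fin.sum_univ_four] at *
      have e0 := hqr 0; have e1 := hqr 1; have e2 := hqr 2; have e3 := hqr 3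
      linear_combination (x 0 j) * e0 + (x 1 j) * e1 + (x 2 j) * e2 +
        (x 3 j) * e3 - κ * hz
    calc (h : ℝ) * (p j : ℝ) = ((h * p j : ℤ) : ℝ) := by push_cast; ring
      _ = ((∑ i, r i * x i j : ℤ) : ℝ) := by rw [hint]
      _ = ∑ i, (r i : ℝ) * (x i j : ℝ) := by push_cast; ring
  set w : Fin 4 → ℝ := fun i => (r i : ℝ) / h with hwdef
  have hhR : (0:ℝ) < (h:ℝ) := by exact_mod_cast hh0
  have hw1 : ∑ i, w i = 1 := by
    have hs : (∑ i, (r i : ℝ)) = (h : ℝ) := by exact_mod_cast hsum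
    rw [hwdef]
    rw [← Finset.sum_div, hs, div_self (ne_of_gt hhR)]
  have hw0 : ∀ i ∈ Finset.univ, (0:ℝ) ≤ w i := by
    intro i _
    exact div_nonneg (by exact_mod_cast hr0 i) (le_of_lt hhR)
  have hcomb : Finset.univ.affineCombination ℝ (fun i => toR (x i)) w = toR p := by
    rw [Finset.univ.affineCombination_eq_linear_combination _ _ hw1]
    funext j
    rw [Finset.sum_apply]
    simp only [Pi.smul_apply, smul_eq_mul, toR, hwdef, div_mul_eq_mul_div, ← Finset.sum_div]
    rw [← hpid j]
    field_simp
  have hmem : toR p ∈ convexHull ℝ (Set.range fun i => toR (x i)) := by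
    rw [← hcomb]
    exact affineCombination_mem_convexHull hw0 hw1
  have huniq := (affineIndependent_iff_eq_of_fintype_affineCombination_eq ℝ
    (fun i => toR (x i))).mp hx.1
  rcases hx.2.2 p hmem with hp0 | ⟨j, hpj⟩
  · -- p = 0 : the weights must be the barycentric coordinates of the origin
    set w' : Fin 4 → ℝ := fun i => (l i : ℝ) / h with hw'def
    have hw'1 : ∑ i, w' i = 1 := by
      rw [hw'def]
      rw [← Finset.sum_div]
      rw [show (∑ i, (l i : ℝ)) = (h : ℝ) by rw [hh]; rw [Fin.sum_univ_four]; push_cast; ring]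
      exact div_self (ne_of_gt hhR)
    have hcomb' : Finset.univ.affineCombination ℝ (fun i => toR (x i)) w' = toR p := by
      rw [Finset.univ.affineCombination_eq_linear_combination _ _ hw'1]
      funext j
      have hz : ((∑ i, l i * x i j : ℤ) : ℝ) = 0 := by rw [hZ j]; simp
      push_cast at hz
      rw [Finset.sum_apply]
      simp only [Pi.smul_apply, smul_eq_mul, toR, hw'def, div_mul_eq_mul_div,
        ← Finset.sum_div, hp0]
      rw [hz]
      simp
    have hww' := huniq w w' hw1 hw'1 (hcomb.trans hcomb'.symm)
    intro i
    have h2 : w i = w' i := congrFun hww' i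
    rw [hwdef, hw'def] at h2
    field_simp at h2
    exact_mod_cast h2
  · -- p = x j : impossible since the weight at j would be 1 but r j < h
    exfalso
    set w' : Fin 4 → ℝ := fun i => if i = j then (1:ℝ) else 0 with hw'def
    have hw'1 : ∑ i, w' i = 1 := by simp [hw'def]
    have hcomb' : Finset.univ.affineCombination ℝ (fun i => toR (x i)) w' = toR p := by
      rw [Finset.univ.affineCombination_eq_linear_combination _ _ hw'1]
      rw [hpj]
      simp [hw'def]
    have hww' := huniq w w' hw1 hw'1 (hcomb.trans hcomb'.symm)
    have : w j = 1 := by rw [hww']; simp [hw'def]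
    rw [hwdef] at this
    field_simp at this
    have h3 : r j = h := by exact_mod_cast this
    have := hrlt j
    omega

theorem fanoTetra_ceil_sum_eq
    (x : Fin 4 → Fin 3 → ℤ) (hx : IsFanoTetra x)
    (l : Fin 4 → ℤ) (hpos : ∀ i, 0 < l i)
    (hgcd : Int.gcd (Int.gcd (Int.gcd (l 0) (l 1)) (l 2)) (l 3) = 1)
    (hbary : (∑ i, l i • x i) = 0)
    (h : ℤ) (hh : h = l 0 + l 1 + l 2 + l 3) :
    ∀ κ : ℤ, 2 ≤ κ → κ ≤ h - 2 →
      (∑ i, ⌈(((κ * l i : ℤ) : ℚ) / (h : ℚ))⌉) = κ + 2 := by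
  intro κ hκ2 hκu
  have hh0 : 0 < h := by
    have := hpos 0; have := hpos 1; have := hpos 2; have := hpos 3; omega
  set q : Fin 4 → ℤ := fun i => (κ * l i) / h with hqdef
  set r : Fin 4 → ℤ := fun i => (κ * l i) % h with hrdef
  have hqr : ∀ i, κ * l i = h * q i + r i := fun i => (Int.mul_ediv_add_emod _ _).symm
  have hr0 : ∀ i, 0 ≤ r i := fun i => Int.emod_nonneg _ (ne_of_gt hh0)
  have hrlt : ∀ i, r i < h := fun i => Int.emod_lt_of_pos _ hh0
  have hsumall : κ * l 0 + κ * l 1 + κ * l 2 + κ * l 3 = κ * h := by rw [hh]; ring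
  have key : r 0 + r 1 + r 2 + r 3 = h * (κ - (q 0 + q 1 + q 2 + q 3)) := by
    have e0 := hqr 0; have e1 := hqr 1; have e2 := hqr 2; have e3 := hqr 3
    linear_combination hsumall - e0 - e1 - e2 - e3
  set m : ℤ := κ - (q 0 + q 1 + q 2 + q 3) with hmdef
  have hm0 : 0 ≤ m := by
    by_contra h'
    push_neg at h'
    nlinarith [hr0 0, hr0 1, hr0 2, hr0 3, mul_pos hh0 (show (0:ℤ) < -m by omega)]
  have hm3 : m ≤ 3 := by
    by_contra h'
    push_neg at h'
    have h4 : h * 4 ≤ h * m := by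
      apply mul_le_mul_of_nonneg_left (by omega) (le_of_lt hh0)
    have := hrlt 0; have := hrlt 1; have := hrlt 2; have := hrlt 3
    linarith [key]
  -- relation for h - κ
  have hr'eq : ∀ i, ((h - κ) * l i) % h = (if r i = 0 then 0 else h - r i) := by
    intro i
    have e : (h - κ) * l i = (h - r i) + (l i - q i - 1) * h := by
      linear_combination -hqr i
    rw [e, Int.add_mul_emod_self_right]
    by_cases hri : r i = 0
    · simp [hri]
    · rw [if_neg hri]
      exact Int.emod_eq_of_lt (by have := hrlt i; omega) (by have := hr0 i; omega)
  have hmc : m = 0 ∨ m = 1 ∨ m = 2 ∨ m = 3 := by omega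
  rcases hmc with hm | hm | hm | hm
  · -- m = 0 : all residues vanish, h ∣ κ, contradiction
    exfalso
    rw [hm, mul_zero] at key
    have hz : r 0 = 0 ∧ r 1 = 0 ∧ r 2 = 0 ∧ r 3 = 0 := by
      have := hr0 0; have := hr0 1; have := hr0 2; have := hr0 3
      omega
    have hd0 : h ∣ κ * l 0 := ⟨q 0, by linarith [hqr 0, hz.1]⟩
    have hd1 : h ∣ κ * l 1 := ⟨q 1, by linarith [hqr 1, hz.2.1]⟩
    have hd2 : h ∣ κ * l 2 := ⟨q 2, by linarith [hqr 2, hz.2.2.1]⟩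
    have hd3 : h ∣ κ * l 3 := ⟨q 3, by linarith [hqr 3, hz.2.2.2]⟩
    have hdvd : ∀ i, h ∣ κ * l i := by
      intro i
      fin_cases i
      · exact hd0
      · exact hd1
      · exact hd2
      · exact hd3
    have := dvd_of_forall_dvd_mul h κ l hgcd hdvd
    have := Int.le_of_dvd (by omega) this
    omega
  · -- m = 1 : fano_rem_eq applies to κ
    exfalso
    have hsum : (∑ i, (κ * l i) % h) = h := by
      rw [Fin.sum_univ_four]
      show r 0 + r 1 + r 2 + r 3 = h
      rw [key, hm, mul_one]
    have hre := fano_rem_eq x hx l hpos hbary h hh κ hsum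
    have hdvd : ∀ i, h ∣ (κ - 1) * l i := by
      intro i
      refine ⟨q i, ?_⟩
      have h1 := hqr i
      have h2 := hre i
      change r i = l i at h2
      linarith [h1, h2]
    have := dvd_of_forall_dvd_mul h (κ - 1) l hgcd hdvd
    have := Int.le_of_dvd (by omega) this
    omega
  · -- m = 2
    rw [hm, mul_two] at key
    by_cases hz : r 0 = 0 ∨ r 1 = 0 ∨ r 2 = 0 ∨ r 3 = 0
    · -- some residue vanishes: apply fano_rem_eq to h - κ, contradiction
      exfalso
      have hsum' : (∑ i, ((h - κ) * l i) % h) = h := by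
        rw [Fin.sum_univ_four, hr'eq 0, hr'eq 1, hr'eq 2, hr'eq 3]
        have := hrlt 0; have := hrlt 1; have := hrlt 2; have := hrlt 3
        have := hr0 0; have := hr0 1; have := hr0 2; have := hr0 3
        split_ifs <;> omega
      have hre := fano_rem_eq x hx l hpos hbary h hh (h - κ) hsum'
      rcases hz with h0 | h0 | h0 | h0
      · have := hre 0; rw [hr'eq 0, if_pos h0] at this; have := hpos 0; omega
      · have := hre 1; rw [hr'eq 1, if_pos h0] at this; have := hpos 1; omega
      · have := hre 2; rw [hr'eq 2, if_pos h0] at this; have := hpos 2; omega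
      · have := hre 3; rw [hr'eq 3, if_pos h0] at this; have := hpos 3; omega
    · -- all residues positive: compute the ceilings
      push_neg at hz
      obtain ⟨hz0, hz1, hz2, hz3⟩ := hz
      rw [Fin.sum_univ_four]
      rw [ceil_int_div _ h (q 0) (r 0) hh0 (hqr 0) (by have := hr0 0; omega)
        (le_of_lt (hrlt 0))]
      rw [ceil_int_div _ h (q 1) (r 1) hh0 (hqr 1) (by have := hr0 1; omega)
        (le_of_lt (hrlt 1))]
      rw [ceil_int_div _ h (q 2) (r 2) hh0 (hqr 2) (by have := hr0 2; omega)
        (le_of_lt (hrlt 2))]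
      rw [ceil_int_div _ h (q 3) (r 3) hh0 (hqr 3) (by have := hr0 3; omega)
        (le_of_lt (hrlt 3))]
      omega
  · -- m = 3 : all residues positive, apply fano_rem_eq to h - κ, contradiction
    exfalso
    rw [hm] at key
    have hzall : r 0 ≠ 0 ∧ r 1 ≠ 0 ∧ r 2 ≠ 0 ∧ r 3 ≠ 0 := by
      have := hrlt 0; have := hrlt 1; have := hrlt 2; have := hrlt 3
      have := hr0 0; have := hr0 1; have := hr0 2; have := hr0 3
      constructor; omega
      constructor; omega
      constructor; omega
      omega
    have hsum' : (∑ i, ((h - κ) * l i) % h) = h := by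
      rw [Fin.sum_univ_four, hr'eq 0, hr'eq 1, hr'eq 2, hr'eq 3]
      rw [if_neg hzall.1, if_neg hzall.2.1, if_neg hzall.2.2.1, if_neg hzall.2.2.2]
      omega
    have hre := fano_rem_eq x hx l hpos hbary h hh (h - κ) hsum'
    have hdvd : ∀ i, h ∣ (h - κ - 1) * l i := by
      intro i
      refine ⟨l i - q i - 1, ?_⟩
      have h1 := hre i
      rw [hr'eq i] at h1
      have h2 := hqr i
      by_cases hri : r i = 0
      · rw [if_pos hri] at h1; have := hpos i; omega
      · rw [if_neg hri] at h1
        linarith [h1, h2]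
    have := dvd_of_forall_dvd_mul h (h - κ - 1) l hgcd hdvd
    have := Int.le_of_dvd (by omega) this
    omega
end

section
/- Let a lattice tetrahedron in ℤ³ with vertices e₁, e₂, e₃, (x,y,z), where x,y,z ≥ 1, contain no non-vertex lattice points, and let d = x+y+z-1. Then ⌈κx/d⌉ + ⌈κy/d⌉ + ⌈κz/d⌉ = κ + 2 for all κ ∈ {1,...,d-1}, and gcd(x,d) = gcd(y,d) = gcd(z,d) = 1. -/
/-!
Put `d = x + y + z - 1` and, for `0 < κ < d`, let `a`, `b`, `c` be the ceilings of `κx/d`, `κy/d`,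
`κz/d`. As `κx/d + κy/d + κz/d = κ + κ/d`, we have `a + b + c ≥ κ + 1`; and if equality held, then
`(a, b, c) = (a - κx/d) e₁ + (b - κy/d) e₂ + (c - κz/d) e₃ + (κ/d) (x, y, z)` would be a convex
combination of the vertices, hence a lattice point of the tetrahedron, hence a vertex, which is
absurd since the coordinate sums of the vertices are `1` and `d + 1`. So `a + b + c ≥ κ + 2`.
Applied to `d - κ`, together with `⌈(d - κ)X/d⌉ = X - ⌊κX/d⌋`, this bounds the sum of the floors
by `κ - 1`. Since a ceiling exceeds the floor by at most one, both bounds are attained: the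
ceilings sum to `κ + 2`, and no `κX/d` with `0 < κ < d` is an integer, which forces `gcd(X, d) = 1`.
-/

def IsEmptyLatticeTetrahedron (x y z : ℤ) : Prop :=
  ∀ p : Fin 3 → ℤ,
    toR p ∈ convexHull ℝ
      ({toR ![1, 0, 0], toR ![0, 1, 0], toR ![0, 0, 1], toR ![x, y, z]} : Set (Fin 3 → ℝ)) →
    p = ![1, 0, 0] ∨ p = ![0, 1, 0] ∨ p = ![0, 0, 1] ∨ p = ![x, y, z]

lemma toR_vecCons (a b c : ℤ) : toR ![a, b, c] = ![(a : ℝ), b, c] := by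
  ext i
  fin_cases i <;> rfl

lemma mem_convexHull_unitVectors_insert {v p : Fin 3 → ℝ} {t : ℝ} (ht : 0 ≤ t)
    (hle : ∀ i, t * v i ≤ p i) (hsum : p 0 + p 1 + p 2 + t = 1 + t * (v 0 + v 1 + v 2)) :
    p ∈ convexHull ℝ ({![1, 0, 0], ![0, 1, 0], ![0, 0, 1], v} : Set (Fin 3 → ℝ)) := by
  let w : Fin 4 → ℝ := ![p 0 - t * v 0, p 1 - t * v 1, p 2 - t * v 2, t]
  let q : Fin 4 → Fin 3 → ℝ := ![![1, 0, 0], ![0, 1, 0], ![0, 0, 1], v]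
  have hw : ∀ i ∈ Finset.univ, 0 ≤ w i := by
    intro i _
    fin_cases i <;> simp [w, hle, ht]
  have hw1 : ∑ i, w i = 1 := by
    simp only [Fin.sum_univ_four, w, Matrix.cons_val_zero, Matrix.cons_val_one, Matrix.cons_val_two,
      Matrix.cons_val_three, Matrix.tail_cons, Matrix.head_cons]
    linarith
  have hq : ∀ i ∈ Finset.univ, q i ∈ ({![1, 0, 0], ![0, 1, 0], ![0, 0, 1], v} : Set _) := by
    intro i _
    fin_cases i <;> simp [q]
  convert (convex_convexHull ℝ _).sum_mem hw hw1 fun i hi => subset_convexHull ℝ _ (hq i hi)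
  ext j
  fin_cases j <;> simp [Fin.sum_univ_four, w, q]

section Ceil

variable {K : Type*} [Field K] [LinearOrder K] [IsStrictOrderedRing K] [FloorRing K]

lemma le_mul_ceil_intCast_div {n d : ℤ} (hd : 0 < d) : n ≤ d * ⌈(n : K) / d⌉ := by
  have hdK : (0 : K) < d := by exact_mod_cast hd
  have := Int.le_ceil ((n : K) / d)
  rw [div_le_iff₀ hdK] at this
  exact_mod_cast (by linarith : (n : K) ≤ d * ⌈(n : K) / d⌉)

lemma ceil_sub_mul_div_eq_sub_floor {d κ X : ℤ} (hd : d ≠ 0) :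
    ⌈(((d - κ) * X : ℤ) : K) / d⌉ = X - ⌊((κ * X : ℤ) : K) / d⌋ := by
  have hdK : (d : K) ≠ 0 := by exact_mod_cast hd
  have : (((d - κ) * X : ℤ) : K) / d = -(((κ * X : ℤ) : K) / d) + X := by
    push_cast
    field_simp
    ring
  rw [this, Int.ceil_add_intCast, Int.ceil_neg]
  ring

lemma not_dvd_of_ceil_eq_floor_add_one {n d : ℤ} (h : ⌈(n : K) / d⌉ = ⌊(n : K) / d⌋ + 1) :
    ¬ d ∣ n := by
  rintro hdvd
  rw [Int.ceil_eq_floor_add_one_iff_notMem] at h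
  rcases eq_or_ne d 0 with rfl | hd
  · exact h ⟨0, by simp⟩
  · exact h ⟨n / d, Int.cast_div hdvd (by exact_mod_cast hd)⟩

end Ceil

lemma Int.gcd_eq_one_of_forall_not_dvd_mul {X d : ℤ} (hd : 0 < d)
    (h : ∀ κ : ℤ, 1 ≤ κ → κ ≤ d - 1 → ¬ d ∣ κ * X) : X.gcd d = 1 := by
  by_contra hg
  obtain ⟨X', hX'⟩ := Int.gcd_dvd_left X d
  obtain ⟨m, hm⟩ := Int.gcd_dvd_right X d
  have hg2 : 2 ≤ (X.gcd d : ℤ) := by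
    have := Int.gcd_pos_of_ne_zero_right X hd.ne'
    omega
  have hm1 : 1 ≤ m := by nlinarith
  exact h m hm1 (by nlinarith) ⟨X', by linear_combination m * hX' - X' * hm⟩

namespace IsEmptyLatticeTetrahedron

variable {x y z : ℤ} (h : IsEmptyLatticeTetrahedron x y z) {d : ℤ} (hd : d = x + y + z - 1)
include h hd

lemma add_two_le_sum_ceil {κ : ℤ} (hκ : 1 ≤ κ) (hκd : κ ≤ d - 1) :
    κ + 2 ≤ ⌈((κ * x : ℤ) : ℚ) / (d : ℚ)⌉ + ⌈((κ * y : ℤ) : ℚ) / (d : ℚ)⌉ +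
      ⌈((κ * z : ℤ) : ℚ) / (d : ℚ)⌉ := by
  set a := ⌈((κ * x : ℤ) : ℚ) / (d : ℚ)⌉
  set b := ⌈((κ * y : ℤ) : ℚ) / (d : ℚ)⌉
  set c := ⌈((κ * z : ℤ) : ℚ) / (d : ℚ)⌉
  have hd0 : 0 < d := by omega
  have ha : κ * x ≤ d * a := le_mul_ceil_intCast_div hd0
  have hb : κ * y ≤ d * b := le_mul_ceil_intCast_div hd0
  have hc : κ * z ≤ d * c := le_mul_ceil_intCast_div hd0
  have hsum_gt : κ < a + b + c := by
    by_contra! hle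
    nlinarith [mul_le_mul_of_nonneg_left hle hd0.le]
  by_contra! hlt
  have hsum : a + b + c = κ + 1 := by omega
  have hdR : (0 : ℝ) < d := by exact_mod_cast hd0
  have hle_of_int : ∀ {X A : ℤ}, κ * X ≤ d * A → (κ / d : ℝ) * X ≤ A := by
    intro X A hXA
    rw [div_mul_eq_mul_div, div_le_iff₀ hdR]
    exact_mod_cast (by linarith : κ * X ≤ A * d)
  have hmem : toR ![a, b, c] ∈ convexHull ℝ
      ({toR ![1, 0, 0], toR ![0, 1, 0], toR ![0, 0, 1], toR ![x, y, z]} : Set (Fin 3 → ℝ)) := by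
    simp only [toR_vecCons, Int.cast_one, Int.cast_zero]
    refine mem_convexHull_unitVectors_insert (t := κ / d) (by positivity) ?_ ?_
    · intro i
      fin_cases i
      exacts [hle_of_int ha, hle_of_int hb, hle_of_int hc]
    · have hsumR : (a + b + c : ℝ) = κ + 1 := by exact_mod_cast hsum
      have hdR' : (x + y + z : ℝ) = d + 1 := by exact_mod_cast (by omega : x + y + z = d + 1)
      simp only [Matrix.cons_val_zero, Matrix.cons_val_one, Matrix.cons_val_two, Matrix.tail_cons,
        Matrix.head_cons]
      field_simp
      linear_combination (d : ℝ) * hsumR - (κ : ℝ) * hdR'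
  have coord_sum : ∀ q : Fin 3 → ℤ, ![a, b, c] = q → a + b + c = q 0 + q 1 + q 2 := by
    rintro q rfl
    rfl
  rcases h _ hmem with hq | hq | hq | hq <;> have := coord_sum _ hq <;>
    simp only [Matrix.cons_val_zero, Matrix.cons_val_one, Matrix.cons_val_two, Matrix.tail_cons,
      Matrix.head_cons] at this <;> omega

lemma sum_floor_add_one_le {κ : ℤ} (hκ : 1 ≤ κ) (hκd : κ ≤ d - 1) :
    ⌊((κ * x : ℤ) : ℚ) / (d : ℚ)⌋ + ⌊((κ * y : ℤ) : ℚ) / (d : ℚ)⌋ +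
      ⌊((κ * z : ℤ) : ℚ) / (d : ℚ)⌋ + 1 ≤ κ := by
  have := h.add_two_le_sum_ceil hd (κ := d - κ) (by omega) (by omega)
  rw [ceil_sub_mul_div_eq_sub_floor (by omega), ceil_sub_mul_div_eq_sub_floor (by omega),
    ceil_sub_mul_div_eq_sub_floor (by omega)] at this
  omega

end IsEmptyLatticeTetrahedron

theorem empty_tetrahedron_ceil_and_gcd
    (x y z : ℤ) (hx : 1 ≤ x) (hy : 1 ≤ y) (hz : 1 ≤ z)
    (hfree : ∀ p : Fin 3 → ℤ,
      toR p ∈ convexHull ℝ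
        ({toR ![1, 0, 0], toR ![0, 1, 0], toR ![0, 0, 1], toR ![x, y, z]} :
          Set (Fin 3 → ℝ)) →
      p = ![1, 0, 0] ∨ p = ![0, 1, 0] ∨ p = ![0, 0, 1] ∨ p = ![x, y, z])
    (d : ℤ) (hd : d = x + y + z - 1) :
    (∀ κ : ℤ, 1 ≤ κ → κ ≤ d - 1 →
      ⌈((κ * x : ℤ) : ℚ) / (d : ℚ)⌉ + ⌈((κ * y : ℤ) : ℚ) / (d : ℚ)⌉ +
        ⌈((κ * z : ℤ) : ℚ) / (d : ℚ)⌉ = κ + 2) ∧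
    Int.gcd x d = 1 ∧ Int.gcd y d = 1 ∧ Int.gcd z d = 1 := by
  have h : IsEmptyLatticeTetrahedron x y z := hfree
  have sharp : ∀ κ : ℤ, 1 ≤ κ → κ ≤ d - 1 →
      (⌈((κ * x : ℤ) : ℚ) / (d : ℚ)⌉ = ⌊((κ * x : ℤ) : ℚ) / (d : ℚ)⌋ + 1 ∧
        ⌈((κ * y : ℤ) : ℚ) / (d : ℚ)⌉ = ⌊((κ * y : ℤ) : ℚ) / (d : ℚ)⌋ + 1 ∧
        ⌈((κ * z : ℤ) : ℚ) / (d : ℚ)⌉ = ⌊((κ * z : ℤ) : ℚ) / (d : ℚ)⌋ + 1) ∧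
      ⌈((κ * x : ℤ) : ℚ) / (d : ℚ)⌉ + ⌈((κ * y : ℤ) : ℚ) / (d : ℚ)⌉ +
        ⌈((κ * z : ℤ) : ℚ) / (d : ℚ)⌉ = κ + 2 := by
    intro κ hκ hκd
    have := h.add_two_le_sum_ceil hd hκ hκd
    have := h.sum_floor_add_one_le hd hκ hκd
    have := Int.ceil_le_floor_add_one (((κ * x : ℤ) : ℚ) / (d : ℚ))
    have := Int.ceil_le_floor_add_one (((κ * y : ℤ) : ℚ) / (d : ℚ))
    have := Int.ceil_le_floor_add_one (((κ * z : ℤ) : ℚ) / (d : ℚ))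
    omega
  have hd0 : 0 < d := by omega
  refine ⟨fun κ hκ hκd => (sharp κ hκ hκd).2, ?_, ?_, ?_⟩ <;>
    refine Int.gcd_eq_one_of_forall_not_dvd_mul hd0 fun κ hκ hκd => ?_
  exacts [not_dvd_of_ceil_eq_floor_add_one (sharp κ hκ hκd).1.1,
    not_dvd_of_ceil_eq_floor_add_one (sharp κ hκ hκd).1.2.1,
    not_dvd_of_ceil_eq_floor_add_one (sharp κ hκ hκd).1.2.2]
end

section
/- The tetrahedron in ℤ³ with vertices (1,0,0), (0,1,0), (1,-3,5), (-2,2,-5) is Fano: the only lattice point it contains besides its vertices is the origin, which lies strictly in its interior. Moreover the barycentric coordinate of the origin with respect to these vertices is (1/4,1/4,1/4,1/4). -/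
open Finset

theorem mem_convexHull_range_iff_exists_weights {R E ι : Type*} [Field R] [LinearOrder R]
    [IsStrictOrderedRing R] [AddCommGroup E] [Module R E] [Fintype ι] (v : ι → E) (x : E) :
    x ∈ convexHull R (Set.range v) ↔
      ∃ w : ι → R, (∀ i, 0 ≤ w i) ∧ ∑ i, w i = 1 ∧ ∑ i, w i • v i = x := by
  classical
  refine ⟨fun hx => ?_, fun ⟨w, hw₀, hw₁, hx⟩ =>
    mem_convexHull_of_exists_fintype w v hw₀ hw₁ (Set.mem_range_self ·) hx⟩
  rw [convexHull_range_eq_exists_affineCombination] at hx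
  obtain ⟨s, w, hw₀, hw₁, rfl⟩ := hx
  have hw₁' : ∑ i, Set.indicator (↑s) w i = 1 := by
    rwa [← sum_indicator_subset w (subset_univ s)] at hw₁
  refine ⟨Set.indicator (↑s) w, fun i => ?_, hw₁', ?_⟩
  · by_cases hi : i ∈ s <;> simp [hi, hw₀ i]
  · rw [← affineCombination_eq_linear_combination _ _ _ hw₁',
      ← affineCombination_indicator_subset w v (subset_univ s)]

namespace Tetrahedron1111

def vertices : Fin 4 → Fin 3 → ℤ := ![![1, 0, 0], ![0, 1, 0], ![1, -3, 5], ![-2, 2, -5]]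

/-- `weightForm p t = 20 • λ`, where `λ` are the barycentric coordinates of the point with
homogeneous coordinates `(p, t)`: the coefficients are the entries of `20 M⁻¹` for `M` the matrix
with columns `(vertices i, 1)`. -/
def weightForm {R : Type*} [CommRing R] (p : Fin 3 → R) (t : R) : Fin 4 → R :=
  ![15 * p 0 - 5 * p 1 - 7 * p 2 + 5 * t, -5 * p 0 + 15 * p 1 + 9 * p 2 + 5 * t,
    -5 * p 0 - 5 * p 1 + p 2 + 5 * t, -5 * p 0 - 5 * p 1 - 3 * p 2 + 5 * t]

lemma weightForm_toR (p : Fin 3 → ℤ) (t : ℤ) (i : Fin 4) :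
    weightForm (toR p) t i = weightForm p t i := by
  fin_cases i <;> simp [weightForm, toR]

lemma weightForm_sum_smul (w : Fin 4 → ℝ) :
    weightForm (∑ i, w i • toR (vertices i)) (∑ i, w i) = (20 : ℝ) • w := by
  ext i
  fin_cases i <;> simp [weightForm, vertices, toR, Fin.sum_univ_four] <;> ring

lemma sum_weightForm (p : Fin 3 → ℝ) (t : ℝ) : ∑ i, weightForm p t i = 20 * t := by
  simp only [weightForm, Fin.sum_univ_four, Matrix.cons_val_zero, Matrix.cons_val_one,
    Matrix.cons_val]
  ring

lemma sum_weightForm_smul (p : Fin 3 → ℝ) (t : ℝ) :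
    ∑ i, weightForm p t i • toR (vertices i) = (20 : ℝ) • p := by
  ext j
  fin_cases j <;> simp [weightForm, vertices, toR, Fin.sum_univ_four] <;> ring

lemma affineIndependent_vertices : AffineIndependent ℝ fun i => toR (vertices i) := by
  rw [affineIndependent_iff_of_fintype]
  intro w hw₁ hw₀ i
  rw [weightedVSub_eq_linear_combination _ hw₁] at hw₀
  have h := congrFun (weightForm_sum_smul w) i
  rw [hw₀, hw₁] at h
  fin_cases i <;> simpa [weightForm] using h.symm

lemma mem_convexHull_vertices_iff (p : Fin 3 → ℝ) :
    p ∈ convexHull ℝ (Set.range fun i => toR (vertices i)) ↔ ∀ i, 0 ≤ weightForm p 1 i := by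
  rw [mem_convexHull_range_iff_exists_weights]
  constructor
  · rintro ⟨w, hw₀, hw₁, rfl⟩ i
    rw [← hw₁, weightForm_sum_smul]
    simpa using hw₀ i
  · intro hp
    refine ⟨fun i => weightForm p 1 i / 20, fun i => div_nonneg (hp i) (by norm_num), ?_, ?_⟩
    · rw [← sum_div, sum_weightForm]
      norm_num
    · simp_rw [div_eq_inv_mul, mul_smul, ← smul_sum, sum_weightForm_smul]
      exact inv_smul_smul₀ (by norm_num : (20 : ℝ) ≠ 0) p

lemma zero_mem_interior_convexHull_vertices :
    0 ∈ interior (convexHull ℝ (Set.range fun i => toR (vertices i))) := by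
  have hopen : IsOpen {p : Fin 3 → ℝ | ∀ i, 0 < weightForm p 1 i} := by
    simp only [Set.ofPred_forall]
    refine isOpen_iInter_of_finite fun i => isOpen_lt continuous_const ?_
    fin_cases i <;> simp only [weightForm] <;> fun_prop
  refine interior_maximal (fun p hp => (mem_convexHull_vertices_iff p).2 fun i => (hp i).le)
    hopen ?_
  intro i
  fin_cases i <;> norm_num [weightForm]

lemma eq_zero_or_eq_vertex_of_weightForm_nonneg {p : Fin 3 → ℤ}
    (hp : ∀ i, 0 ≤ weightForm p 1 i) : p = 0 ∨ ∃ i, p = vertices i := by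
  obtain ⟨a, b, c, rfl⟩ : ∃ a b c, p = ![a, b, c] :=
    ⟨p 0, p 1, p 2, by ext i; fin_cases i <;> rfl⟩
  have h₀ := hp 0
  have h₁ := hp 1
  have h₂ := hp 2
  have h₃ := hp 3
  simp only [weightForm, Matrix.cons_val_zero, Matrix.cons_val_one, Matrix.cons_val, mul_one]
    at h₀ h₁ h₂ h₃
  have key : a = 0 ∧ b = 0 ∧ c = 0 ∨ a = 1 ∧ b = 0 ∧ c = 0 ∨ a = 0 ∧ b = 1 ∧ c = 0 ∨
      a = 1 ∧ b = -3 ∧ c = 5 ∨ a = -2 ∧ b = 2 ∧ c = -5 := by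
    have : -2 ≤ a := by omega
    have : a ≤ 1 := by omega
    have : -3 ≤ b := by omega
    have : b ≤ 2 := by omega
    interval_cases a <;> interval_cases b <;> omega
  rcases key with ⟨rfl, rfl, rfl⟩ | ⟨rfl, rfl, rfl⟩ | ⟨rfl, rfl, rfl⟩ | ⟨rfl, rfl, rfl⟩ |
    ⟨rfl, rfl, rfl⟩
  exacts [Or.inl (by simp), Or.inr ⟨0, rfl⟩, Or.inr ⟨1, rfl⟩, Or.inr ⟨2, rfl⟩, Or.inr ⟨3, rfl⟩]

lemma isFanoTetra_vertices : IsFanoTetra vertices := by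
  refine ⟨affineIndependent_vertices, zero_mem_interior_convexHull_vertices, fun p hp => ?_⟩
  refine eq_zero_or_eq_vertex_of_weightForm_nonneg fun i => ?_
  have := (mem_convexHull_vertices_iff (toR p)).1 hp i
  rw [← Int.cast_one, weightForm_toR] at this
  exact_mod_cast this

end Tetrahedron1111

open Tetrahedron1111 in
theorem tetrahedron_1111_isFano :
    IsFanoTetra ![![1, 0, 0], ![0, 1, 0], ![1, -3, 5], ![-2, 2, -5]] ∧
    (∑ i, (![(1 : ℝ) / 4, 1 / 4, 1 / 4, 1 / 4] i) •
        toR (![![1, 0, 0], ![0, 1, 0], ![1, -3, 5], ![-2, 2, -5]] i)) = 0 ∧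
    (∑ i, (![(1 : ℝ) / 4, 1 / 4, 1 / 4, 1 / 4] i)) = 1 := by
  refine ⟨isFanoTetra_vertices, ?_, ?_⟩
  · ext j
    fin_cases j <;> simp [toR, Fin.sum_univ_four] <;> norm_num
  · simp [Fin.sum_univ_four]
    norm_num
end

section
/- Let P ⊂ ℝ³ be the octahedron with vertices ±e₁, ±e₂, ±(a,b,c) where 0 ≤ a ≤ b ≤ c/2 and c ≥ 1. If P is Fano (the only non-vertex lattice point of P is the origin, strictly interior), then either (a,b,c) = (0,0,1) or (a,b,c) = (1,1,2). -/
/-- A convex lattice polytope (given by its vertex set `V ⊂ ℤ³`) is *Fano* if the only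
non-vertex lattice point it contains is the origin, which lies strictly in its interior. -/
def IsFanoPolytope (V : Set (Fin 3 → ℤ)) : Prop :=
  (0 : Fin 3 → ℝ) ∈ interior (convexHull ℝ (toR '' V)) ∧
  ∀ p : Fin 3 → ℤ, toR p ∈ convexHull ℝ (toR '' V) → p = 0 ∨ p ∈ V

theorem Convex.smul_add_mem_of_abs_add_abs_le {E : Type*} [AddCommGroup E] [Module ℝ E]
    {C : Set E} (hC : Convex ℝ C) {e₁ e₂ v : E} (h₁ : e₁ ∈ C) (h₁' : -e₁ ∈ C)
    (h₂ : e₂ ∈ C) (h₂' : -e₂ ∈ C) (hv : v ∈ C) {t x y : ℝ} (ht : 0 ≤ t)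
    (hxy : |x| + |y| ≤ 1 - t) :
    t • v + x • e₁ + y • e₂ ∈ C := by
  -- write `x = x⁺ - x⁻`, `y = y⁺ - y⁻` and spread the slack `4 s` evenly over `±e₁, ±e₂`
  set s := (1 - t - |x| - |y|) / 4
  have hs : 0 ≤ s := by simp only [s]; linarith
  have hmem := hC.sum_mem (t := Finset.univ) (w := ![t, x⁺ + s, x⁻ + s, y⁺ + s, y⁻ + s])
    (z := ![v, e₁, -e₁, e₂, -e₂])
    (fun i _ => by fin_cases i <;> simp [ht, hs, add_nonneg])
    (by simp [Fin.sum_univ_five, s, ← posPart_add_negPart]; ring)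
    (fun i _ => by fin_cases i <;> assumption)
  convert hmem using 1
  simp only [Fin.sum_univ_five, Fin.isValue, Matrix.cons_val_zero, Matrix.cons_val_one,
    Matrix.cons_val, smul_neg]
  nth_rw 1 [← posPart_sub_negPart x, ← posPart_sub_negPart y]
  module

def octahedronVertices (a b c : ℤ) : Set (Fin 3 → ℤ) :=
  {![1, 0, 0], ![-1, 0, 0], ![0, 1, 0], ![0, -1, 0], ![a, b, c], ![-a, -b, -c]}

lemma toR_neg (p : Fin 3 → ℤ) : toR (-p) = -toR p := by
  funext i; simp [toR]

lemma neg_mem_octahedronVertices {a b c : ℤ} {p : Fin 3 → ℤ}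
    (hp : p ∈ octahedronVertices a b c) : -p ∈ octahedronVertices a b c := by
  simp only [octahedronVertices, Set.mem_insert_iff, Set.mem_singleton_iff] at hp ⊢
  rcases hp with rfl | rfl | rfl | rfl | rfl | rfl <;> simp

lemma height_mem_of_mem_octahedronVertices {a b c : ℤ} {p : Fin 3 → ℤ}
    (hp : p ∈ octahedronVertices a b c) : p 2 = 0 ∨ p 2 = c ∨ p 2 = -c := by
  simp only [octahedronVertices, Set.mem_insert_iff, Set.mem_singleton_iff] at hp
  rcases hp with rfl | rfl | rfl | rfl | rfl | rfl <;> simp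

/-- The hypothesis on `(i, j, k)` says that it lies in the pyramid over `conv(±e₁, ±e₂)` with apex
`(a, b, c)`, at height `k = t c`. -/
lemma IsFanoPolytope.octahedron_height_of_mem_pyramid {a b c : ℤ}
    (hfano : IsFanoPolytope (octahedronVertices a b c)) {i j k : ℤ} {t : ℝ} (ht : 0 ≤ t)
    (hij : |i - t * a| + |j - t * b| ≤ 1 - t) (hk : (k : ℝ) = t * c) :
    k = 0 ∨ k = c ∨ k = -c := by
  set P := convexHull ℝ (toR '' octahedronVertices a b c)
  have hvert : ∀ p ∈ octahedronVertices a b c, toR p ∈ P :=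
    fun p hp => subset_convexHull ℝ _ (Set.mem_image_of_mem toR hp)
  have hvert' : ∀ p ∈ octahedronVertices a b c, -toR p ∈ P := fun p hp => by
    rw [← toR_neg]; exact hvert _ (neg_mem_octahedronVertices hp)
  have hmem : toR ![i, j, k] ∈ P := by
    have := (convex_convexHull ℝ _).smul_add_mem_of_abs_add_abs_le
      (hvert ![1, 0, 0] (by simp [octahedronVertices]))
      (hvert' ![1, 0, 0] (by simp [octahedronVertices]))
      (hvert ![0, 1, 0] (by simp [octahedronVertices]))
      (hvert' ![0, 1, 0] (by simp [octahedronVertices]))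
      (hvert ![a, b, c] (by simp [octahedronVertices])) ht hij
    convert this using 1
    funext l; fin_cases l <;> simp [toR, hk]
  rcases hfano.2 _ hmem with h | h
  · left; simpa using congrFun h 2
  · simpa using height_mem_of_mem_octahedronVertices h

lemma IsFanoPolytope.octahedron_height_eq_one_or_le_add {a b c : ℤ}
    (hfano : IsFanoPolytope (octahedronVertices a b c)) (ha : 0 ≤ a) (hb : 0 ≤ b) :
    c = 1 ∨ c ≤ a + b := by
  by_contra! h
  have hc : (0 : ℝ) < c := by exact_mod_cast (by omega : 0 < c)
  have habc : (a : ℝ) + b + 1 ≤ c := by exact_mod_cast h.2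
  have ha' : (0 : ℝ) ≤ a := by exact_mod_cast ha
  have hb' : (0 : ℝ) ≤ b := by exact_mod_cast hb
  have hheight := hfano.octahedron_height_of_mem_pyramid (i := 0) (j := 0) (k := 1) (t := 1 / c)
    (by positivity) ?_ (by push_cast; field_simp)
  · omega
  rw [Int.cast_zero, zero_sub, zero_sub, abs_neg, abs_neg, abs_of_nonneg (by positivity),
    abs_of_nonneg (by positivity)]
  field_simp
  linarith

lemma IsFanoPolytope.octahedron_diagonal_eq_one {b : ℤ}
    (hfano : IsFanoPolytope (octahedronVertices b b (2 * b))) (hb : 1 ≤ b) : b = 1 := by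
  have hb' : (1 : ℝ) ≤ b := by exact_mod_cast hb
  have hheight := hfano.octahedron_height_of_mem_pyramid (i := 1) (j := 1) (k := 2) (t := 1 / b)
    (by positivity) ?_ (by push_cast; field_simp)
  · omega
  field_simp
  simp only [Int.cast_one, sub_self, abs_zero, mul_zero, zero_mul, sub_nonneg]
  linarith

theorem fano_octahedron_classification
    (a b c : ℤ) (ha : 0 ≤ a) (hab : a ≤ b) (hbc : 2 * b ≤ c) (hc : 1 ≤ c)
    (hfano : IsFanoPolytope
      ({![1, 0, 0], ![-1, 0, 0], ![0, 1, 0], ![0, -1, 0], ![a, b, c], ![-a, -b, -c]} :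
        Set (Fin 3 → ℤ))) :
    (a, b, c) = (0, 0, 1) ∨ (a, b, c) = (1, 1, 2) := by
  replace hfano : IsFanoPolytope (octahedronVertices a b c) := hfano
  rcases hfano.octahedron_height_eq_one_or_le_add ha (ha.trans hab) with hc1 | hc_le
  · left
    simp only [Prod.mk.injEq]
    omega
  · right
    obtain ⟨rfl, rfl⟩ : b = a ∧ c = 2 * a := by omega
    have hb1 := hfano.octahedron_diagonal_eq_one (by omega)
    simp only [Prod.mk.injEq]
    omega
end

section
/- Let P be the polytope in ℤ³ with vertices e₁, e₂, -e₁-e₂, (a,b,c), -(a,b,c) where 0 < a ≤ b ≤ c and a+b ≤ c. If P is Fano, then (a,b,c) = (1,2,3). -/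
lemma hull5 {v1 v2 v3 v4 v5 x : Fin 3 → ℝ} {t1 t2 t3 t4 t5 : ℝ}
    (h1 : 0 ≤ t1) (h2 : 0 ≤ t2) (h3 : 0 ≤ t3) (h4 : 0 ≤ t4) (h5 : 0 ≤ t5)
    (hsum : t1 + t2 + t3 + t4 + t5 = 1)
    (hx : x = t1 • v1 + t2 • v2 + t3 • v3 + t4 • v4 + t5 • v5) :
    x ∈ convexHull ℝ ({v1, v2, v3, v4, v5} : Set (Fin 3 → ℝ)) := by
  subst hx
  have H := (convex_convexHull ℝ ({v1, v2, v3, v4, v5} : Set (Fin 3 → ℝ))).sum_mem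
    (t := (Finset.univ : Finset (Fin 5))) (w := ![t1, t2, t3, t4, t5])
    (z := ![v1, v2, v3, v4, v5])
    (by intro i _; fin_cases i <;> simpa)
    (by simp [Fin.sum_univ_five, hsum])
    (by intro i _; fin_cases i <;> exact subset_convexHull ℝ _ (by simp))
  simpa [Fin.sum_univ_five] using H

theorem fano_five_vertex_classification
    (a b c : ℤ) (ha : 0 < a) (hab : a ≤ b) (hbc : b ≤ c) (habc : a + b ≤ c)
    (hfano : IsFanoPolytope
      ({![1, 0, 0], ![0, 1, 0], ![-1, -1, 0], ![a, b, c], ![-a, -b, -c]} :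
        Set (Fin 3 → ℤ))) :
    (a, b, c) = (1, 2, 3) := by
  obtain ⟨-, hlat⟩ := hfano
  have himg : toR '' ({![1, 0, 0], ![0, 1, 0], ![-1, -1, 0], ![a, b, c], ![-a, -b, -c]} :
      Set (Fin 3 → ℤ)) =
      ({toR ![1, 0, 0], toR ![0, 1, 0], toR ![-1, -1, 0], toR ![a, b, c],
        toR ![-a, -b, -c]} : Set (Fin 3 → ℝ)) := by
    simp [Set.image_insert_eq]
  have hA : (1 : ℝ) ≤ (a : ℝ) := by exact_mod_cast ha
  have hAB : (a : ℝ) ≤ (b : ℝ) := by exact_mod_cast hab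
  have hBC : (b : ℝ) ≤ (c : ℝ) := by exact_mod_cast hbc
  have hABC : (a : ℝ) + (b : ℝ) ≤ (c : ℝ) := by exact_mod_cast habc
  have hC0 : (0 : ℝ) < (c : ℝ) := by linarith
  have hCne : (c : ℝ) ≠ 0 := ne_of_gt hC0
  -- Step 1 : c ≤ a + b, hence c = a + b
  have h1 : c ≤ a + b := by
    by_contra h
    push_neg at h
    have hcc : (a : ℝ) + (b : ℝ) + 1 ≤ (c : ℝ) := by exact_mod_cast h
    have hp : toR ![0, 0, -1] ∈ convexHull ℝ (toR ''
        ({![1, 0, 0], ![0, 1, 0], ![-1, -1, 0], ![a, b, c], ![-a, -b, -c]} :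
          Set (Fin 3 → ℤ))) := by
      rw [himg]
      refine hull5 (t1 := ((c:ℝ) - 1 + 2*a - b)/(3*c)) (t2 := ((c:ℝ) - 1 + 2*b - a)/(3*c))
        (t3 := ((c:ℝ) - 1 - a - b)/(3*c)) (t4 := 0) (t5 := 1/(c:ℝ))
        (div_nonneg (by linarith) (by linarith)) (div_nonneg (by linarith) (by linarith))
        (div_nonneg (by linarith) (by linarith)) le_rfl (by positivity)
        (by field_simp; ring) ?_
      funext i
      fin_cases i <;> simp [toR] <;> field_simp <;> ring
    rcases hlat ![0, 0, -1] hp with h0 | hm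
    · have := congrFun h0 2; simp at this
    · simp only [Set.mem_insert_iff, Set.mem_singleton_iff] at hm
      rcases hm with h' | h' | h' | h' | h' <;>
        · have e0 := congrFun h' 0
          have e1 := congrFun h' 1
          have e2 := congrFun h' 2
          simp at e0 e1 e2 <;> omega
  have hc : c = a + b := le_antisymm h1 habc
  -- Step 2 : b ≤ 2 * a
  have h2 : b ≤ 2 * a := by
    by_contra h
    push_neg at h
    have hcc : 2 * (a : ℝ) + 1 ≤ (b : ℝ) := by exact_mod_cast h
    have hp : toR ![0, 1, 1] ∈ convexHull ℝ (toR ''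
        ({![1, 0, 0], ![0, 1, 0], ![-1, -1, 0], ![a, b, c], ![-a, -b, -c]} :
          Set (Fin 3 → ℤ))) := by
      rw [himg]
      refine hull5 (t1 := ((b:ℝ) - 2*a - 1)/(3*c)) (t2 := (3*(c:ℝ) - 2*b - 1 + a)/(3*c))
        (t3 := ((a:ℝ) + b - 1)/(3*c)) (t4 := 1/(c:ℝ)) (t5 := 0)
        (div_nonneg (by linarith) (by linarith)) (div_nonneg (by linarith) (by linarith))
        (div_nonneg (by linarith) (by linarith)) (by positivity) le_rfl
        (by field_simp; ring) ?_
      funext i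
      fin_cases i <;> simp [toR] <;> field_simp <;> ring
    rcases hlat ![0, 1, 1] hp with h0 | hm
    · have := congrFun h0 2; simp at this
    · simp only [Set.mem_insert_iff, Set.mem_singleton_iff] at hm
      rcases hm with h' | h' | h' | h' | h' <;>
        · have e0 := congrFun h' 0
          have e1 := congrFun h' 1
          have e2 := congrFun h' 2
          simp at e0 e1 e2 <;> omega
  -- Step 3 : c ≤ 2 * b - a
  have h3 : c ≤ 2 * b - a := by
    by_contra h
    push_neg at h
    have hcc : 2 * (b : ℝ) - (a : ℝ) + 1 ≤ (c : ℝ) := by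
      have : 2 * b - a + 1 ≤ c := by omega
      exact_mod_cast this
    have hp : toR ![0, 0, 1] ∈ convexHull ℝ (toR ''
        ({![1, 0, 0], ![0, 1, 0], ![-1, -1, 0], ![a, b, c], ![-a, -b, -c]} :
          Set (Fin 3 → ℤ))) := by
      rw [himg]
      refine hull5 (t1 := ((c:ℝ) - 1 + b - 2*a)/(3*c)) (t2 := ((c:ℝ) - 1 + a - 2*b)/(3*c))
        (t3 := ((c:ℝ) - 1 + a + b)/(3*c)) (t4 := 1/(c:ℝ)) (t5 := 0)
        (div_nonneg (by linarith) (by linarith)) (div_nonneg (by linarith) (by linarith))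
        (div_nonneg (by linarith) (by linarith)) (by positivity) le_rfl
        (by field_simp; ring) ?_
      funext i
      fin_cases i <;> simp [toR] <;> field_simp <;> ring
    rcases hlat ![0, 0, 1] hp with h0 | hm
    · have := congrFun h0 2; simp at this
    · simp only [Set.mem_insert_iff, Set.mem_singleton_iff] at hm
      rcases hm with h' | h' | h' | h' | h' <;>
        · have e0 := congrFun h' 0
          have e1 := congrFun h' 1
          have e2 := congrFun h' 2
          simp at e0 e1 e2 <;> omega
  -- now b = 2a and c = 3a
  have hb2 : b = 2 * a := by omega
  have hc3 : c = 3 * a := by omega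
  -- Step 4 : a = 1
  have h4 : a = 1 := by
    by_contra h
    have ha2 : 2 ≤ a := by omega
    have hA2 : (2 : ℝ) ≤ (a : ℝ) := by exact_mod_cast ha2
    have hB : (b : ℝ) = 2 * (a : ℝ) := by exact_mod_cast hb2
    have hC : (c : ℝ) = 3 * (a : ℝ) := by exact_mod_cast hc3
    have hAne : (a : ℝ) ≠ 0 := by linarith
    have hp : toR ![1, 2, 3] ∈ convexHull ℝ (toR ''
        ({![1, 0, 0], ![0, 1, 0], ![-1, -1, 0], ![a, b, c], ![-a, -b, -c]} :
          Set (Fin 3 → ℤ))) := by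
      rw [himg]
      refine hull5 (t1 := ((a:ℝ) - 1)/(3*a)) (t2 := ((a:ℝ) - 1)/(3*a))
        (t3 := ((a:ℝ) - 1)/(3*a)) (t4 := 1/(a:ℝ)) (t5 := 0)
        (div_nonneg (by linarith) (by linarith)) (div_nonneg (by linarith) (by linarith))
        (div_nonneg (by linarith) (by linarith)) (by positivity) le_rfl
        (by field_simp; ring) ?_
      funext i
      fin_cases i <;> simp [toR, hB, hC] <;> field_simp <;> ring
    rcases hlat ![1, 2, 3] hp with h0 | hm
    · have := congrFun h0 2; simp at this
    · simp only [Set.mem_insert_iff, Set.mem_singleton_iff] at hm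
      rcases hm with h' | h' | h' | h' | h' <;>
        · have e0 := congrFun h' 0
          have e1 := congrFun h' 1
          have e2 := congrFun h' 2
          simp at e0 e1 e2 <;> omega
  have hb : b = 2 := by omega
  have hcf : c = 3 := by omega
  simp [h4, hb, hcf]
end
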